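/- For u, w ∈ S_{[a,n]} and k ∈ [a, n-1], construct u', w' ∈ S_{[a,n+1]} by appending the value n+1 at position k+1 in the one-line notation after position k (i.e., u'(t) = u(t) for a ≤ t ≤ k, u'(k+1) = n+1, u'(t) = u(t-1) for k+1 < t ≤ n+1; similarly for w'). Then u →^k w if and only if u' →^{k+1} w'. -/

import Mathlib

/-- `w` has finitely many non-fixed points. -/
def FinSupp (w : Equiv.Perm ℤ) : Prop := {i : ℤ | w i ≠ i}.Finite

/-- Descent set of a permutation of ℤ. -/
def Des (w : Equiv.Perm ℤ) : Set ℤ := {i : ℤ | w (i + 1) < w i}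

/-- Number of inversions. -/
noncomputable def permLength (w : Equiv.Perm ℤ) : ℕ :=
  {p : ℤ × ℤ | p.1 < p.2 ∧ w p.2 < w p.1}.ncard

/-- Membership in `S_{[a,n]}`: all non-fixed points lie in `[a,n]`. -/
def InS (a n : ℤ) (w : Equiv.Perm ℤ) : Prop := ∀ i : ℤ, w i ≠ i → a ≤ i ∧ i ≤ n

/-- Cover relation of the `k`-Bruhat order. -/
def BCover (k : ℤ) (u w : Equiv.Perm ℤ) : Prop :=
  ∃ i j : ℤ, i ≤ k ∧ k < j ∧ w = u * Equiv.swap i j ∧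
    permLength w = permLength u + 1

/-- The `k`-Bruhat order: reflexive-transitive closure of the cover relation. -/
def kBruhat (k : ℤ) : Equiv.Perm ℤ → Equiv.Perm ℤ → Prop :=
  Relation.ReflTransGen (BCover k)

/-- There is an increasing `k`-chain from `u` to `w`. -/
def IncTo (k : ℤ) (u w : Equiv.Perm ℤ) : Prop :=
  ∃ (m : ℕ) (us : ℕ → Equiv.Perm ℤ) (ab : ℕ → ℤ × ℤ),
    us 0 = u ∧ us m = w ∧
    (∀ i < m, (ab i).1 ≤ k ∧ k < (ab i).2 ∧
      us (i + 1) = us i * Equiv.swap (ab i).1 (ab i).2 ∧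
      permLength (us (i + 1)) = permLength (us i) + 1) ∧
    (∀ i j : ℕ, i < j → j < m → us i (ab i).1 < us j (ab j).1)

/-- `fix_{(lo,hi]}(u,w) = {u(t) : lo < t ≤ hi, u(t) = w(t)}`. -/
def fixSet (lo hi : ℤ) (u w : Equiv.Perm ℤ) : Set ℤ :=
  {m : ℤ | ∃ t : ℤ, lo < t ∧ t ≤ hi ∧ u t = m ∧ w t = m}


/-!
Appending `n + 1` after position `k` is right multiplication by the cycle `ρ = insertAfter k n`,
which fixes the positions `≤ k` and moves `k + 1` to the top. Conjugation by `ρ` turns a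
transposition `(i j)` with `i ≤ k < j ≤ n` into `(i, j + 1)`, and for `v ∈ S_{[a,n]}` the product
`v ρ` has exactly the `n - k` extra inversions `(k + 1, t)`, `k + 2 ≤ t ≤ n + 1`. Hence
`v ↦ v ρ` maps `k`-chains to `(k + 1)`-chains, keeping the values `u_s (i_s)` that have to
increase.

Along a `k`-chain the values at positions `≤ k` increase and those at positions `> k` decrease,
since each cover moves a smaller value to the right. So a chain between elements of `S_{[a,n]}`
stays in `S_{[a,n]}`, and a `(k + 1)`-chain starting at `u ρ` keeps the value `n + 1` at position
`k + 1`, never swaps that position, and therefore is the image of a `k`-chain.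
-/

open Equiv

def inversions (v : Perm ℤ) : Set (ℤ × ℤ) := {p : ℤ × ℤ | p.1 < p.2 ∧ v p.2 < v p.1}

lemma permLength_eq_ncard_inversions (v : Perm ℤ) : permLength v = (inversions v).ncard := rfl

namespace InS

variable {A B : ℤ} {v : Perm ℤ}

lemma apply_eq_of_lt (h : InS A B v) {t : ℤ} (ht : t < A) : v t = t := by
  by_contra hv
  have := h t hv
  omega

lemma apply_eq_of_gt (h : InS A B v) {t : ℤ} (ht : B < t) : v t = t := by
  by_contra hv
  have := h t hv
  omega

lemma apply_le (h : InS A B v) {t : ℤ} (ht : t ≤ B) : v t ≤ B := by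
  by_contra! hvt
  have := v.injective (h.apply_eq_of_gt hvt)
  omega

lemma le_apply (h : InS A B v) {t : ℤ} (ht : A ≤ t) : A ≤ v t := by
  by_contra! hvt
  have := v.injective (h.apply_eq_of_lt hvt)
  omega

lemma mul_swap (h : InS A B v) (i j : ℤ) :
    InS (min A (min i j)) (max B (max i j)) (v * swap i j) := by
  intro t ht
  by_cases hti : t = i
  · omega
  by_cases htj : t = j
  · omega
  rw [Perm.mul_apply, swap_apply_of_ne_of_ne hti htj] at ht
  have := h t ht
  omega

lemma le_of_mul_swap {i j : ℤ} (h : InS A B v) (h' : InS A B (v * swap i j)) (hij : i ≠ j) :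
    j ≤ B := by
  by_contra! hj
  have hvi : v i = v j := by
    rw [h.apply_eq_of_gt hj, ← h'.apply_eq_of_gt hj, Perm.mul_apply, swap_apply_right]
  exact hij (v.injective hvi)

lemma inversions_finite (h : InS A B v) : (inversions v).Finite := by
  refine ((Set.finite_Icc A B).prod (Set.finite_Icc A B)).subset ?_
  rintro ⟨p, q⟩ ⟨hpq, hv⟩
  dsimp only at hpq hv
  have hp : A ≤ p := by
    by_contra! hp
    have : A ≤ q → A ≤ v q := h.le_apply
    have := h.apply_eq_of_lt hp
    have : q < A → v q = q := h.apply_eq_of_lt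
    omega
  have hq : q ≤ B := by
    by_contra! hq
    have : p ≤ B → v p ≤ B := h.apply_le
    have := h.apply_eq_of_gt hq
    have : B < p → v p = p := h.apply_eq_of_gt
    omega
  exact ⟨⟨hp, by omega⟩, ⟨by omega, hq⟩⟩

end InS

section SwapLength

variable {A B i j : ℤ} {v : Perm ℤ}

lemma swap_not_lt_swap_cases {p q : ℤ} (hij : i < j) (hpq : p < q)
    (h : ¬ swap i j p < swap i j q) :
    (p = i ∧ i < q ∧ q < j) ∨ (i < p ∧ p < j ∧ q = j) ∨ (p = i ∧ q = j) := by
  rw [swap_apply_def, swap_apply_def] at h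
  split_ifs at h <;> omega

/-- The pairs that `swap i j` keeps sorted are moved by it, the others stay put: this injects
the inversions of `v` into those of `v * swap i j` other than `(i, j)`. -/
theorem permLength_lt_permLength_mul_swap (h : InS A B v) (hij : i < j) (hv : v i < v j) :
    permLength v < permLength (v * swap i j) := by
  set s := swap i j
  let ψ : ℤ × ℤ → ℤ × ℤ := fun p => if s p.1 < s p.2 then (s p.1, s p.2) else p
  have hmaps : ∀ p ∈ inversions v, ψ p ∈ inversions (v * s) \ {(i, j)} := by
    rintro ⟨p, q⟩ ⟨hpq, hvpq⟩
    dsimp only at hpq hvpq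
    by_cases hs : s p < s q
    · simp only [ψ, if_pos hs, inversions, Set.mem_sdiff, Set.mem_ofPred_eq, Perm.mul_apply,
        s, swap_apply_self, Set.mem_singleton_iff, Prod.mk.injEq]
      refine ⟨⟨hs, hvpq⟩, fun ⟨hp, hq⟩ => ?_⟩
      rw [swap_apply_eq_iff, swap_apply_left] at hp
      rw [swap_apply_eq_iff, swap_apply_right] at hq
      omega
    · simp only [ψ, if_neg hs, inversions, Set.mem_sdiff, Set.mem_ofPred_eq, Perm.mul_apply,
        Set.mem_singleton_iff, Prod.mk.injEq]
      rcases swap_not_lt_swap_cases hij hpq hs with ⟨rfl, hiq, hqj⟩ | ⟨hip, hpj, rfl⟩ | ⟨rfl, rfl⟩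
      · rw [swap_apply_left, swap_apply_of_ne_of_ne hiq.ne' hqj.ne]
        omega
      · rw [swap_apply_right, swap_apply_of_ne_of_ne hip.ne' hpj.ne]
        omega
      · omega
  have hinj : Set.InjOn ψ (inversions v) := by
    rintro ⟨p, q⟩ ⟨hpq, -⟩ ⟨p', q'⟩ ⟨hpq', -⟩ he
    dsimp only at hpq hpq'
    simp only [ψ] at he
    split_ifs at he with hs hs'
    · simpa [s] using he
    · obtain ⟨rfl, rfl⟩ := Prod.mk.inj he
      simp only [s, swap_apply_self] at hs'
      exact absurd hpq hs'
    · obtain ⟨rfl, rfl⟩ := Prod.mk.inj he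
      simp only [s, swap_apply_self] at hs
      exact absurd hpq' hs
    · exact he
  have hfin := (h.mul_swap i j).inversions_finite
  have hij_mem : (i, j) ∈ inversions (v * s) := by
    simpa [inversions, s] using ⟨hij, hv⟩
  calc permLength v ≤ (inversions (v * s) \ {(i, j)}).ncard :=
        Set.ncard_le_ncard_of_injOn ψ hmaps hinj hfin.sdiff
    _ < permLength (v * s) := Set.ncard_sdiff_singleton_lt_of_mem hij_mem hfin

theorem apply_lt_apply_of_permLength_mul_swap (h : InS A B v) (hij : i < j)
    (hlen : permLength (v * swap i j) = permLength v + 1) : v i < v j := by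
  by_contra! hle
  have hne : v i ≠ v j := v.injective.ne hij.ne
  have hlt := permLength_lt_permLength_mul_swap (h.mul_swap i j) hij
    (by simp only [Perm.mul_apply, swap_apply_left, swap_apply_right]; omega)
  rw [mul_swap_mul_self] at hlt
  omega

end SwapLength

/-- The cover conditions in the definition of `IncTo`. -/
def IsCoverChain (k : ℤ) (m : ℕ) (us : ℕ → Perm ℤ) (ab : ℕ → ℤ × ℤ) : Prop :=
  ∀ i < m, (ab i).1 ≤ k ∧ k < (ab i).2 ∧
    us (i + 1) = us i * swap (ab i).1 (ab i).2 ∧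
    permLength (us (i + 1)) = permLength (us i) + 1

namespace IsCoverChain

variable {k A B : ℤ} {m : ℕ} {us : ℕ → Perm ℤ} {ab : ℕ → ℤ × ℤ}

lemma exists_inS (hc : IsCoverChain k m us ab) (h0 : InS A B (us 0)) :
    ∀ i ≤ m, ∃ A' B', InS A' B' (us i) := by
  intro i
  induction i with
  | zero => exact fun _ => ⟨A, B, h0⟩
  | succ i ih =>
    intro hi
    obtain ⟨A', B', h⟩ := ih (by omega)
    rw [(hc i (by omega)).2.2.1]
    exact ⟨_, _, h.mul_swap _ _⟩

lemma apply_fst_lt_apply_snd (hc : IsCoverChain k m us ab) (h0 : InS A B (us 0)) {s : ℕ}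
    (hs : s < m) : us s (ab s).1 < us s (ab s).2 := by
  obtain ⟨h1, h2, hstep, hlen⟩ := hc s hs
  obtain ⟨A', B', h⟩ := hc.exists_inS h0 s hs.le
  exact apply_lt_apply_of_permLength_mul_swap h (by omega) (hstep ▸ hlen)

lemma apply_succ_le (hc : IsCoverChain k m us ab) (h0 : InS A B (us 0)) {s : ℕ} (hs : s < m)
    {q : ℤ} (hq : k < q) : us (s + 1) q ≤ us s q := by
  obtain ⟨h1, -, hstep, -⟩ := hc s hs
  rw [hstep, Perm.mul_apply]
  by_cases hq2 : q = (ab s).2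
  · rw [hq2, swap_apply_right]
    exact (hc.apply_fst_lt_apply_snd h0 hs).le
  · rw [swap_apply_of_ne_of_ne (by omega) hq2]

lemma le_apply_succ (hc : IsCoverChain k m us ab) (h0 : InS A B (us 0)) {s : ℕ} (hs : s < m)
    {p : ℤ} (hp : p ≤ k) : us s p ≤ us (s + 1) p := by
  obtain ⟨-, h2, hstep, -⟩ := hc s hs
  rw [hstep, Perm.mul_apply]
  by_cases hp1 : p = (ab s).1
  · rw [hp1, swap_apply_left]
    exact (hc.apply_fst_lt_apply_snd h0 hs).le
  · rw [swap_apply_of_ne_of_ne hp1 (by omega)]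

lemma apply_le_apply_of_gt (hc : IsCoverChain k m us ab) (h0 : InS A B (us 0)) {q : ℤ}
    (hq : k < q) {i j : ℕ} (hij : i ≤ j) (hj : j ≤ m) : us j q ≤ us i q := by
  induction j, hij using Nat.le_induction with
  | base => exact le_rfl
  | succ j hij ih => exact (hc.apply_succ_le h0 (by omega) hq).trans (ih (by omega))

lemma apply_le_apply_of_le (hc : IsCoverChain k m us ab) (h0 : InS A B (us 0)) {p : ℤ}
    (hp : p ≤ k) {i j : ℕ} (hij : i ≤ j) (hj : j ≤ m) : us i p ≤ us j p := by
  induction j, hij using Nat.le_induction with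
  | base => exact le_rfl
  | succ j hij ih => exact (ih (by omega)).trans (hc.le_apply_succ h0 (by omega) hp)

lemma inS (hc : IsCoverChain k m us ab) {a n : ℤ} (hak : a ≤ k + 1) (hkn : k ≤ n)
    (h0 : InS a n (us 0)) (hm : InS a n (us m)) : ∀ i ≤ m, InS a n (us i) := by
  intro i hi t ht
  by_contra hout
  rcases not_and_or.mp hout with hta | htn
  · have h1 := hc.apply_le_apply_of_le h0 (p := t) (by omega) (Nat.zero_le i) hi
    have h2 := hc.apply_le_apply_of_le h0 (p := t) (by omega) hi le_rfl
    rw [h0.apply_eq_of_lt (by omega)] at h1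
    rw [hm.apply_eq_of_lt (by omega)] at h2
    omega
  · have h1 := hc.apply_le_apply_of_gt h0 (q := t) (by omega) (Nat.zero_le i) hi
    have h2 := hc.apply_le_apply_of_gt h0 (q := t) (by omega) hi le_rfl
    rw [h0.apply_eq_of_gt (by omega)] at h1
    rw [hm.apply_eq_of_gt (by omega)] at h2
    omega

lemma snd_le (hc : IsCoverChain k m us ab) {a n : ℤ} (hIn : ∀ i ≤ m, InS a n (us i)) :
    ∀ i < m, (ab i).2 ≤ n := by
  intro i hi
  obtain ⟨h1, h2, hstep, -⟩ := hc i hi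
  exact (hIn i hi.le).le_of_mul_swap (hstep ▸ hIn (i + 1) hi) (by omega)

end IsCoverChain

lemma mul_swap_mul (v σ : Perm ℤ) (x y : ℤ) :
    v * swap x y * σ = v * σ * swap (σ⁻¹ x) (σ⁻¹ y) := by
  rw [swap_apply_apply, inv_inv]
  group

theorem incTo_mul_right {k k' c : ℤ} {m : ℕ} {us : ℕ → Perm ℤ} {ab : ℕ → ℤ × ℤ} (σ : Perm ℤ)
    (hc : IsCoverChain k m us ab)
    (hinc : ∀ i j : ℕ, i < j → j < m → us i (ab i).1 < us j (ab j).1)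
    (hlen : ∀ i ≤ m, (permLength (us i * σ) : ℤ) = permLength (us i) + c)
    (hfix : ∀ i < m, σ (ab i).1 = (ab i).1) (hfst : ∀ i < m, (ab i).1 ≤ k')
    (hsnd : ∀ i < m, k' < σ⁻¹ (ab i).2) :
    IncTo k' (us 0 * σ) (us m * σ) := by
  have hfix' : ∀ i < m, σ⁻¹ (ab i).1 = (ab i).1 := fun i hi =>
    Perm.inv_eq_iff_eq.mpr (hfix i hi).symm
  refine ⟨m, (us · * σ), fun i => ((ab i).1, σ⁻¹ (ab i).2), rfl, rfl,
    fun i hi => ⟨hfst i hi, hsnd i hi, ?_, ?_⟩, fun i j hij hj => ?_⟩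
  · dsimp only
    rw [(hc i hi).2.2.1, mul_swap_mul, hfix' i hi]
  · dsimp only
    have := (hc i hi).2.2.2
    have := hlen i hi.le
    have := hlen (i + 1) hi
    omega
  · simp only [Perm.mul_apply, hfix i (hij.trans hj), hfix j hj]
    exact hinc i j hij hj

/-- For `v ∈ S_{[a,n]}`, the one-line notation of `v * insertAfter k n` is that of `v` with `n + 1`
inserted after position `k`. The guard `k ≤ n` only serves to make this a bijection for all
`k, n`. -/
def insertAfter (k n : ℤ) : Perm ℤ where
  toFun t := if k ≤ n then (if t = k + 1 then n + 1 else if k + 2 ≤ t ∧ t ≤ n + 1 then t - 1 else t)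
    else t
  invFun t := if k ≤ n then (if t = n + 1 then k + 1 else if k + 1 ≤ t ∧ t ≤ n then t + 1 else t)
    else t
  left_inv t := by dsimp only; split_ifs <;> omega
  right_inv t := by dsimp only; split_ifs <;> omega

section InsertAfter

variable {a k n : ℤ}

lemma insertAfter_apply (hkn : k ≤ n) (t : ℤ) : insertAfter k n t =
    if t = k + 1 then n + 1 else if k + 2 ≤ t ∧ t ≤ n + 1 then t - 1 else t :=
  if_pos hkn

lemma insertAfter_of_le (hkn : k ≤ n) {t : ℤ} (ht : t ≤ k) : insertAfter k n t = t := by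
  rw [insertAfter_apply hkn]
  split_ifs <;> omega

lemma insertAfter_self (hkn : k ≤ n) : insertAfter k n (k + 1) = n + 1 := by
  rw [insertAfter_apply hkn, if_pos rfl]

lemma insertAfter_of_mem (hkn : k ≤ n) {t : ℤ} (h1 : k + 2 ≤ t) (h2 : t ≤ n + 1) :
    insertAfter k n t = t - 1 := by
  rw [insertAfter_apply hkn]
  split_ifs <;> omega

lemma insertAfter_of_gt (hkn : k ≤ n) {t : ℤ} (ht : n + 1 < t) : insertAfter k n t = t := by
  rw [insertAfter_apply hkn]
  split_ifs <;> omega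

lemma insertAfter_inv_of_le (hkn : k ≤ n) {t : ℤ} (ht : t ≤ k) : (insertAfter k n)⁻¹ t = t :=
  Perm.inv_eq_iff_eq.mpr (insertAfter_of_le hkn ht).symm

lemma insertAfter_inv_of_mem (hkn : k ≤ n) {t : ℤ} (h1 : k + 1 ≤ t) (h2 : t ≤ n) :
    (insertAfter k n)⁻¹ t = t + 1 :=
  Perm.inv_eq_iff_eq.mpr (by rw [insertAfter_of_mem hkn] <;> omega)

lemma eq_mul_insertAfter {u u' : Perm ℤ} (hak : a ≤ k + 1) (hkn : k ≤ n) (hu : InS a n u)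
    (hu' : InS a (n + 1) u') (h1 : ∀ t : ℤ, a ≤ t → t ≤ k → u' t = u t)
    (h2 : u' (k + 1) = n + 1) (h3 : ∀ t : ℤ, k + 1 < t → t ≤ n + 1 → u' t = u (t - 1)) :
    u' = u * insertAfter k n := by
  ext t
  rw [Perm.mul_apply]
  rcases lt_or_ge t a with hta | hat
  · rw [insertAfter_of_le hkn (by omega), hu'.apply_eq_of_lt hta, hu.apply_eq_of_lt hta]
  rcases le_or_gt t k with htk | hkt
  · rw [insertAfter_of_le hkn htk, h1 t hat htk]
  rcases eq_or_lt_of_le (show k + 1 ≤ t by omega) with rfl | hkt'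
  · rw [insertAfter_self hkn, h2, hu.apply_eq_of_gt (by omega)]
  rcases le_or_gt t (n + 1) with htn | hnt
  · rw [insertAfter_of_mem hkn (by omega) htn, h3 t hkt' htn]
  · rw [insertAfter_of_gt hkn hnt, hu'.apply_eq_of_gt hnt, hu.apply_eq_of_gt (by omega)]

lemma InS.mul_insertAfter {v : Perm ℤ} (hak : a ≤ k + 1) (hkn : k ≤ n) (hv : InS a n v) :
    InS a (n + 1) (v * insertAfter k n) := by
  intro t ht
  rw [Perm.mul_apply] at ht
  by_contra hout
  rcases not_and_or.mp hout with hta | htn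
  · rw [insertAfter_of_le hkn (by omega), hv.apply_eq_of_lt (by omega)] at ht
    exact ht rfl
  · rw [insertAfter_of_gt hkn (by omega), hv.apply_eq_of_gt (by omega)] at ht
    exact ht rfl

lemma InS.mul_insertAfter_inv {v : Perm ℤ} (hak : a ≤ k + 1) (hkn : k ≤ n)
    (hv : InS a (n + 1) v) (hvk : v (k + 1) = n + 1) : InS a n (v * (insertAfter k n)⁻¹) := by
  intro t ht
  rw [Perm.mul_apply] at ht
  by_contra hout
  rcases not_and_or.mp hout with hta | htn
  · rw [insertAfter_inv_of_le hkn (by omega), hv.apply_eq_of_lt (by omega)] at ht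
    exact ht rfl
  rcases eq_or_lt_of_le (show n + 1 ≤ t by omega) with rfl | hnt
  · rw [Perm.inv_eq_iff_eq.mpr (insertAfter_self hkn).symm, hvk] at ht
    exact ht rfl
  · rw [Perm.inv_eq_iff_eq.mpr (insertAfter_of_gt hkn hnt).symm, hv.apply_eq_of_gt hnt] at ht
    exact ht rfl

lemma inversions_mul_insertAfter {v : Perm ℤ} (hkn : k ≤ n) (hv : InS a n v) :
    inversions (v * insertAfter k n) =
      Prod.map (insertAfter k n) (insertAfter k n) ⁻¹' inversions v ∪
        {k + 1} ×ˢ Set.Icc (k + 2) (n + 1) := by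
  set ρ := insertAfter k n
  have hρ : ∀ t, (t ≤ k ∧ ρ t = t) ∨ (t = k + 1 ∧ ρ t = n + 1) ∨
      (k + 2 ≤ t ∧ t ≤ n + 1 ∧ ρ t = t - 1) ∨ (n + 1 < t ∧ ρ t = t) := fun t => by
    rw [insertAfter_apply hkn]
    split_ifs <;> omega
  have hvρ : ∀ t, (ρ t ≤ n ∧ v (ρ t) ≤ n) ∨ (n < ρ t ∧ v (ρ t) = ρ t) := fun t => by
    rcases le_or_gt (ρ t) n with h | h
    · exact .inl ⟨h, hv.apply_le h⟩
    · exact .inr ⟨h, hv.apply_eq_of_gt h⟩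
  ext ⟨p, q⟩
  simp only [inversions, Set.mem_union, Set.mem_preimage, Prod.map, Set.mem_ofPred_eq,
    Set.mem_prod, Set.mem_singleton_iff, Set.mem_Icc, Perm.mul_apply]
  have := hρ p
  have := hρ q
  have := hvρ p
  have := hvρ q
  omega

lemma permLength_mul_insertAfter {v : Perm ℤ} (hkn : k ≤ n) (hv : InS a n v) :
    (permLength (v * insertAfter k n) : ℤ) = permLength v + (n - k) := by
  set ρ := insertAfter k n
  have hbij : Function.Bijective (Prod.map ρ ρ) :=
    ⟨ρ.injective.prodMap ρ.injective, ρ.surjective.prodMap ρ.surjective⟩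
  have hdisj :
      Disjoint (Prod.map ρ ρ ⁻¹' inversions v) ({k + 1} ×ˢ Set.Icc (k + 2) (n + 1)) := by
    rw [Set.disjoint_left]
    rintro ⟨p, q⟩ ⟨hlt, -⟩ ⟨hp, hq⟩
    simp only [Set.mem_singleton_iff, Set.mem_Icc, Prod.map] at hp hq hlt
    rw [hp, insertAfter_self hkn, insertAfter_of_mem hkn hq.1 hq.2] at hlt
    omega
  have hpre : (Prod.map ρ ρ ⁻¹' inversions v).ncard = permLength v :=
    Set.ncard_preimage_of_injective_subset_range hbij.1 (by simp [hbij.2.range_eq])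
  have hIcc : (Set.Icc (k + 2) (n + 1)).ncard = (n - k).toNat := by
    rw [← Finset.coe_Icc, Set.ncard_coe_finset, Int.card_Icc]
    omega
  rw [permLength_eq_ncard_inversions, inversions_mul_insertAfter hkn hv,
    Set.ncard_union_eq hdisj ((hv.inversions_finite).preimage hbij.1.injOn)
      ((Set.finite_singleton _).prod (Set.finite_Icc _ _)),
    hpre, Set.ncard_prod, Set.ncard_singleton, hIcc]
  omega

end InsertAfter

section Transfer

variable {a k n : ℤ} {u w : Perm ℤ}

theorem IncTo.mul_insertAfter (hak : a ≤ k + 1) (hkn : k ≤ n) (hu : InS a n u) (hw : InS a n w)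
    (h : IncTo k u w) : IncTo (k + 1) (u * insertAfter k n) (w * insertAfter k n) := by
  obtain ⟨m, us, ab, rfl, rfl, hc, hinc⟩ := h
  have hIn := IsCoverChain.inS hc hak hkn hu hw
  have hsnd := IsCoverChain.snd_le hc hIn
  refine incTo_mul_right _ hc hinc (fun i hi => permLength_mul_insertAfter hkn (hIn i hi))
    (fun i hi => insertAfter_of_le hkn (hc i hi).1) (fun i hi => by linarith [(hc i hi).1])
    (fun i hi => ?_)
  rw [insertAfter_inv_of_mem hkn (hc i hi).2.1 (hsnd i hi)]
  linarith [(hc i hi).2.1]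

/-- Along a `(k + 1)`-chain the value at position `k + 1` can only grow, so starting from the top
value `n + 1` it stays there and position `k + 1` is never swapped. -/
theorem IncTo.of_mul_insertAfter (hak : a ≤ k + 1) (hkn : k ≤ n) (hu : InS a n u)
    (hw : InS a n w) (h : IncTo (k + 1) (u * insertAfter k n) (w * insertAfter k n)) :
    IncTo k u w := by
  obtain ⟨m, us, ab, h0, hm, hc, hinc⟩ := h
  have hc : IsCoverChain (k + 1) m us ab := hc
  have h0' : InS a (n + 1) (us 0) := h0 ▸ hu.mul_insertAfter hak hkn
  have hIn := hc.inS (by omega) (by omega) h0' (hm ▸ hw.mul_insertAfter hak hkn)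
  have htop : ∀ i ≤ m, us i (k + 1) = n + 1 := fun i hi => by
    have := hc.apply_le_apply_of_le h0' le_rfl (Nat.zero_le i) hi
    rw [h0, Perm.mul_apply, insertAfter_self hkn, hu.apply_eq_of_gt (by omega)] at this
    exact le_antisymm ((hIn i hi).apply_le (by omega)) this
  have hfst : ∀ i < m, (ab i).1 ≤ k := fun i hi => by
    obtain ⟨h1, h2, hstep, -⟩ := hc i hi
    by_contra! hk
    have hvals : us i (ab i).2 = us i (k + 1) := by
      rw [htop i hi.le, ← htop (i + 1) hi, hstep, Perm.mul_apply, show (ab i).1 = k + 1 by omega,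
        swap_apply_left]
    have := (us i).injective hvals
    omega
  have hsnd := hc.snd_le hIn
  have hlen : ∀ i ≤ m, (permLength (us i * (insertAfter k n)⁻¹) : ℤ) =
      permLength (us i) + -(n - k) := fun i hi => by
    have := permLength_mul_insertAfter hkn ((hIn i hi).mul_insertAfter_inv hak hkn (htop i hi))
    rw [inv_mul_cancel_right] at this
    omega
  have := incTo_mul_right _ hc hinc hlen (fun i hi => insertAfter_inv_of_le hkn (hfst i hi)) hfst
    (fun i hi => by
      have := (hc i hi).2.1
      rw [inv_inv, insertAfter_of_mem hkn (by omega) (hsnd i hi)]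
      omega)
  rwa [h0, hm, mul_inv_cancel_right, mul_inv_cancel_right] at this

end Transfer

theorem stmt14 (a n k : ℤ) (hak : a ≤ k) (hkn : k ≤ n - 1)
    (u w u' w' : Equiv.Perm ℤ) (hu : InS a n u) (hw : InS a n w)
    (hu' : InS a (n + 1) u') (hw' : InS a (n + 1) w')
    (hu'1 : ∀ t : ℤ, a ≤ t → t ≤ k → u' t = u t)
    (hu'2 : u' (k + 1) = n + 1)
    (hu'3 : ∀ t : ℤ, k + 1 < t → t ≤ n + 1 → u' t = u (t - 1))
    (hw'1 : ∀ t : ℤ, a ≤ t → t ≤ k → w' t = w t)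
    (hw'2 : w' (k + 1) = n + 1)
    (hw'3 : ∀ t : ℤ, k + 1 < t → t ≤ n + 1 → w' t = w (t - 1)) :
    IncTo k u w ↔ IncTo (k + 1) u' w' := by
  have hak' : a ≤ k + 1 := by omega
  have hkn' : k ≤ n := by omega
  obtain rfl := eq_mul_insertAfter hak' hkn' hu hu' hu'1 hu'2 hu'3
  obtain rfl := eq_mul_insertAfter hak' hkn' hw hw' hw'1 hw'2 hw'3
  exact ⟨IncTo.mul_insertAfter hak' hkn' hu hw, IncTo.of_mul_insertAfter hak' hkn' hu hw⟩
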